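/- arXiv:2212.00446 — 9 statements merged into one kernel-verified Lean document; each statement's English description precedes it below -/
import Mathlib

section
/- Let p be a prime and a an integer not divisible by p. Then for every positive integer n, the p-adic valuation of the rational number S_n = Σ_{k=1}^{n} (1/a^k + 1/(p-a)^k) · p^k/k satisfies v_p(S_n) ≥ (n+1) - log_p((n+1)/2). -/
/-!
Put `x = p / a`, `y = p / (p - a)` and `s = p² / (a (p - a))`, so that `x + y = x y = s` and
`v_p(s) = 2`. Since `(1 - x t)(1 - y t) = 1 - s t (1 - t)`, taking logarithms suggests, and
induction on `n` proves, `S_n = ∑_{j + m = n} (-1)^m C(j - 1, m) s^j / j`. Only the terms with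
`m < j`, i.e. `n + 1 ≤ 2 j`, survive, and each has valuation at least
`2 j - v_p(j) ≥ 2 j - log_p j ≥ (n + 1) - log_p ((n + 1) / 2)`.
The ultrametric inequality then bounds `v_p(S_n)` once `S_n ≠ 0`: if `s > 0` then `x, y > 0`,
and if `s < 0` every term of the expansion has the sign of `(-1)^n`.
-/

open Finset

section Coefficients

variable (F : Type*) [Field F]

-- Both coefficients vanish at `j = 0` through division by zero; the recursions below rely on it.
def powerSumCoeff (j m : ℕ) : F := (-1) ^ m * ((j + m : ℕ) / j) * j.choose m

def truncLogCoeff (j m : ℕ) : F := (-1) ^ m * (((j - 1).choose m : ℕ) / j)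

variable {F}

@[simp]
lemma powerSumCoeff_zero_left (m : ℕ) : powerSumCoeff F 0 m = 0 := by
  simp [powerSumCoeff]

lemma powerSumCoeff_zero_right [CharZero F] {j : ℕ} (hj : j ≠ 0) : powerSumCoeff F j 0 = 1 := by
  simp [powerSumCoeff, hj]

lemma powerSumCoeff_succ_succ [CharZero F] {j m : ℕ} (h : j ≠ 0 ∨ m ≠ 0) :
    powerSumCoeff F (j + 1) (m + 1) = powerSumCoeff F j (m + 1) - powerSumCoeff F j m := by
  rcases Nat.eq_zero_or_pos j with rfl | hj
  · simp [powerSumCoeff, Nat.choose_eq_zero_of_lt (show 1 < m + 1 by omega)]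
  have hpascal : ((j + 1).choose (m + 1) : F) = j.choose m + j.choose (m + 1) := by
    rw [Nat.choose_succ_succ]; push_cast; ring
  have habsorb : ((j.choose (m + 1) : ℕ) : F) * (m + 1) = j.choose m * ((j : F) - m) := by
    rcases le_or_gt m j with hmj | hjm
    · have h := congrArg (Nat.cast (R := F)) (Nat.choose_succ_right_eq j m)
      push_cast [Nat.cast_sub hmj] at h
      exact h
    · simp [Nat.choose_eq_zero_of_lt hjm, Nat.choose_eq_zero_of_lt (Nat.lt_succ_of_lt hjm)]
  have hjF : (j : F) ≠ 0 := Nat.cast_ne_zero.mpr hj.ne'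
  simp only [powerSumCoeff, pow_succ, hpascal]
  push_cast
  field_simp
  linear_combination habsorb

@[simp]
lemma truncLogCoeff_zero_right (j : ℕ) : truncLogCoeff F j 0 = 1 / j := by
  simp [truncLogCoeff]

lemma truncLogCoeff_succ [CharZero F] (j m : ℕ) :
    truncLogCoeff F j (m + 1) =
      truncLogCoeff F j m + powerSumCoeff F j (m + 1) / (j + m + 1 : ℕ) := by
  rcases Nat.eq_zero_or_pos j with rfl | hj
  · simp [truncLogCoeff]
  obtain ⟨i, rfl⟩ : ∃ i, j = i + 1 := ⟨j - 1, by omega⟩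
  have hne : ((i + 1 + m + 1 : ℕ) : F) ≠ 0 := Nat.cast_ne_zero.mpr (by omega)
  simp only [truncLogCoeff, powerSumCoeff, Nat.add_sub_cancel, Nat.choose_succ_succ, pow_succ]
  field_simp
  push_cast
  ring

lemma truncLogCoeff_eq_zero_of_le {j m : ℕ} (h : j ≤ m) : truncLogCoeff F j m = 0 := by
  rcases j.eq_zero_or_pos with rfl | hj
  · simp [truncLogCoeff]
  · simp [truncLogCoeff, Nat.choose_eq_zero_of_lt (by omega : j - 1 < m)]

end Coefficients

section PowerSums

variable {F : Type*} [Field F] [CharZero F]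

lemma sum_antidiagonal_succ_powerSumCoeff (s : F) (n : ℕ) :
    ∑ q ∈ antidiagonal (n + 1), powerSumCoeff F q.1 q.2 * s ^ q.1 =
      s ^ (n + 1) + ∑ q ∈ antidiagonal n, powerSumCoeff F q.1 (q.2 + 1) * s ^ q.1 := by
  rw [Nat.sum_antidiagonal_succ', powerSumCoeff_zero_right n.succ_ne_zero, one_mul]

variable {x y s : F}

theorem pow_succ_add_pow_succ_eq_sum_powerSumCoeff (hsum : x + y = s) (hprod : x * y = s) :
    ∀ k : ℕ, x ^ (k + 1) + y ^ (k + 1) =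
      ∑ q ∈ antidiagonal (k + 1), powerSumCoeff F q.1 q.2 * s ^ q.1
  | 0 => by simp [Nat.sum_antidiagonal_succ, powerSumCoeff, hsum]
  | 1 => by
    have h2 : ∑ q ∈ antidiagonal 2, powerSumCoeff F q.1 q.2 * s ^ q.1 = s ^ 2 - 2 * s := by
      norm_num [Nat.sum_antidiagonal_succ, powerSumCoeff, sub_eq_add_neg, add_comm]
    rw [h2]
    linear_combination (x + y + s) * hsum - 2 * hprod
  | k + 2 => by
    have hshift : ∑ q ∈ antidiagonal (k + 2 + 1), powerSumCoeff F q.1 q.2 * s ^ q.1 =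
        s ^ (k + 2 + 1) + ∑ q ∈ antidiagonal (k + 1),
          powerSumCoeff F (q.1 + 1) (q.2 + 1) * s ^ (q.1 + 1) := by
      rw [Nat.sum_antidiagonal_succ, Nat.sum_antidiagonal_succ', powerSumCoeff_zero_left,
        zero_mul, zero_add, powerSumCoeff_zero_right (by omega), one_mul]
    calc x ^ (k + 2 + 1) + y ^ (k + 2 + 1)
        = s * (x ^ (k + 1 + 1) + y ^ (k + 1 + 1)) - s * (x ^ (k + 1) + y ^ (k + 1)) := by
          linear_combination
            (x ^ (k + 2) + y ^ (k + 2)) * hsum - (x ^ (k + 1) + y ^ (k + 1)) * hprod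
      _ = s * ∑ q ∈ antidiagonal (k + 1 + 1), powerSumCoeff F q.1 q.2 * s ^ q.1
          - s * ∑ q ∈ antidiagonal (k + 1), powerSumCoeff F q.1 q.2 * s ^ q.1 := by
          rw [pow_succ_add_pow_succ_eq_sum_powerSumCoeff hsum hprod (k + 1),
            pow_succ_add_pow_succ_eq_sum_powerSumCoeff hsum hprod k]
      _ = s ^ (k + 2 + 1) + ∑ q ∈ antidiagonal (k + 1),
            (powerSumCoeff F q.1 (q.2 + 1) - powerSumCoeff F q.1 q.2) * s ^ (q.1 + 1) := by
          rw [sum_antidiagonal_succ_powerSumCoeff, mul_add, mul_sum, mul_sum, add_sub_assoc,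
            ← sum_sub_distrib]
          simp only [pow_succ]
          congr 1
          · ring
          exact sum_congr rfl fun q _ => by ring
      _ = ∑ q ∈ antidiagonal (k + 2 + 1), powerSumCoeff F q.1 q.2 * s ^ q.1 := by
          rw [hshift]
          refine congrArg _ (sum_congr rfl fun q hq => ?_)
          rw [powerSumCoeff_succ_succ (by rw [HasAntidiagonal.mem_antidiagonal] at hq; omega)]

theorem sum_Icc_pow_add_pow_div_eq_sum_truncLogCoeff (hsum : x + y = s) (hprod : x * y = s)
    (n : ℕ) : ∑ k ∈ Icc 1 n, (x ^ k + y ^ k) / k =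
      ∑ q ∈ antidiagonal n, truncLogCoeff F q.1 q.2 * s ^ q.1 := by
  induction n with
  | zero => simp [truncLogCoeff]
  | succ n ih =>
    rw [sum_Icc_succ_top (by omega), ih, pow_succ_add_pow_succ_eq_sum_powerSumCoeff hsum hprod,
      sum_antidiagonal_succ_powerSumCoeff, Nat.sum_antidiagonal_succ' (n := n),
      truncLogCoeff_zero_right, add_div, sum_div]
    have hterm : ∀ q ∈ antidiagonal n, truncLogCoeff F q.1 (q.2 + 1) * s ^ q.1 =
        truncLogCoeff F q.1 q.2 * s ^ q.1 +
          powerSumCoeff F q.1 (q.2 + 1) * s ^ q.1 / (n + 1 : ℕ) := by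
      intro q hq
      rw [HasAntidiagonal.mem_antidiagonal] at hq
      rw [truncLogCoeff_succ, hq]
      ring
    rw [sum_congr rfl hterm, sum_add_distrib]
    push_cast
    ring

end PowerSums

section Nonvanishing

variable {F : Type*} [Field F] [LinearOrder F] [IsStrictOrderedRing F]

lemma neg_one_pow_mul_truncLogCoeff_mul_pow (j m : ℕ) (s : F) :
    (-1) ^ (j + m) * (truncLogCoeff F j m * s ^ j) = ((j - 1).choose m : ℕ) / j * (-s) ^ j := by
  have hsq : ((-1 : F) ^ m) ^ 2 = 1 := by rw [← pow_mul, mul_comm, pow_mul]; simp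
  rw [truncLogCoeff, neg_pow s, pow_add]
  linear_combination ((-1) ^ j * (((j - 1).choose m : ℕ) / j : F) * s ^ j) * hsq

theorem sum_truncLogCoeff_mul_pow_ne_zero_of_neg {s : F} (hs : s < 0) {n : ℕ} (hn : n ≠ 0) :
    ∑ q ∈ antidiagonal n, truncLogCoeff F q.1 q.2 * s ^ q.1 ≠ 0 := by
  have hterm : ∀ q ∈ antidiagonal n, (-1) ^ n * (truncLogCoeff F q.1 q.2 * s ^ q.1) =
      ((q.1 - 1).choose q.2 : ℕ) / q.1 * (-s) ^ q.1 := fun q hq => by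
    rw [← HasAntidiagonal.mem_antidiagonal.mp hq, neg_one_pow_mul_truncLogCoeff_mul_pow]
  have hpos : 0 < (-1) ^ n * ∑ q ∈ antidiagonal n, truncLogCoeff F q.1 q.2 * s ^ q.1 := by
    rw [mul_sum, sum_congr rfl hterm]
    have hs' : 0 < -s := neg_pos.mpr hs
    refine sum_pos' (fun q _ => by positivity) ⟨(n, 0), by simp, ?_⟩
    have hn' : (0 : F) < n := Nat.cast_pos.mpr (Nat.pos_of_ne_zero hn)
    simp only [Nat.choose_zero_right, Nat.cast_one]
    exact mul_pos (one_div_pos.mpr hn') (pow_pos hs' n)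
  exact fun h => hpos.ne' (by rw [h, mul_zero])

theorem sum_Icc_pow_add_pow_div_ne_zero {x y s : F} (hsum : x + y = s) (hprod : x * y = s)
    (hs : s ≠ 0) {n : ℕ} (hn : n ≠ 0) : ∑ k ∈ Icc 1 n, (x ^ k + y ^ k) / k ≠ 0 := by
  rcases hs.lt_or_gt with hneg | hpos
  · rw [sum_Icc_pow_add_pow_div_eq_sum_truncLogCoeff hsum hprod]
    exact sum_truncLogCoeff_mul_pow_ne_zero_of_neg hneg hn
  obtain ⟨hx, hy⟩ : 0 < x ∧ 0 < y := by
    rcases pos_and_pos_or_neg_and_neg_of_mul_pos (hprod ▸ hpos) with h | ⟨hx, hy⟩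
    · exact h
    · linarith
  refine (sum_pos (fun k hk => ?_) (nonempty_Icc.mpr (by omega))).ne'
  exact div_pos (by positivity) (Nat.cast_pos.mpr (mem_Icc.mp hk).1)

end Nonvanishing

theorem padicValRat.le_sum_of_le {p : ℕ} [Fact p.Prime] {ι : Type*} {t : Finset ι}
    {f : ι → ℚ} {B : ℤ} (hf : ∀ i ∈ t, f i ≠ 0 → B ≤ padicValRat p (f i))
    (hsum : ∑ i ∈ t, f i ≠ 0) :
    B ≤ padicValRat p (∑ i ∈ t, f i) := by
  classical
  induction t using Finset.induction_on with
  | empty => simp at hsum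
  | insert i t hi ih =>
    rw [sum_insert hi] at hsum ⊢
    have ht : ∀ j ∈ t, f j ≠ 0 → B ≤ padicValRat p (f j) := fun j hj =>
      hf j (mem_insert_of_mem hj)
    by_cases hfi : f i = 0
    · rw [hfi, zero_add] at hsum ⊢
      exact ih ht hsum
    by_cases hrest : ∑ j ∈ t, f j = 0
    · rw [hrest, add_zero] at hsum ⊢
      exact hf i (mem_insert_self i t) hfi
    exact (le_min (hf i (mem_insert_self i t) hfi) (ih ht hrest)).trans
      (padicValRat.min_le_padicValRat_add hsum)

theorem padicValRat.prime_pow_div_of_not_dvd {p : ℕ} [Fact p.Prime] (k : ℕ) {b : ℤ}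
    (hb : ¬ (p : ℤ) ∣ b) :
    padicValRat p ((p : ℚ) ^ k / b) = k := by
  have hb0 : (b : ℚ) ≠ 0 := Int.cast_ne_zero.mpr fun h => hb (h ▸ dvd_zero _)
  rw [padicValRat.div (pow_ne_zero _ (Nat.cast_ne_zero.mpr (Fact.out : p.Prime).ne_zero)) hb0,
    padicValRat.pow, padicValRat.self (Fact.out : p.Prime).one_lt, padicValRat.of_int,
    padicValInt.eq_zero_of_not_dvd hb]
  simp

lemma neg_padicValNat_le_padicValRat_truncLogCoeff {p : ℕ} [Fact p.Prime] {j m : ℕ}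
    (h : truncLogCoeff ℚ j m ≠ 0) :
    -(padicValNat p j : ℤ) ≤ padicValRat p (truncLogCoeff ℚ j m) := by
  have hC : ((j - 1).choose m : ℚ) ≠ 0 := fun h0 => h (by simp [truncLogCoeff, h0])
  have hj : (j : ℚ) ≠ 0 := fun h0 => h (by simp [truncLogCoeff, h0])
  rw [truncLogCoeff, padicValRat.mul (by simp) (div_ne_zero hC hj), padicValRat.pow,
    padicValRat.neg, padicValRat.one, padicValRat.div hC hj, padicValRat.of_nat,
    padicValRat.of_nat]
  omega

theorem Real.logb_sub_logb_le_two_mul_sub {b x y : ℝ} (hb : 2 ≤ b) (hy : 1 ≤ y) (hyx : y ≤ x) :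
    logb b x - logb b y ≤ 2 * (x - y) := by
  have hlogb : 1 / 2 < log b := by
    linarith [Real.log_two_gt_d9, Real.log_le_log two_pos hb]
  have hlog_nonneg : 0 ≤ log (x / y) := Real.log_nonneg ((one_le_div (by linarith)).mpr hyx)
  have hlog_le : log (x / y) ≤ x - y := by
    have h := Real.log_le_sub_one_of_pos (div_pos (by linarith : 0 < x) (by linarith : 0 < y))
    have : x / y - 1 ≤ x - y := by
      rw [div_sub_one (by linarith), div_le_iff₀ (by linarith)]; nlinarith
    linarith
  calc logb b x - logb b y = log (x / y) / log b := by
        rw [Real.log_div (by linarith) (by linarith), Real.logb, Real.logb, sub_div]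
    _ ≤ 2 * log (x / y) := by rw [div_le_iff₀ (by linarith)]; nlinarith
    _ ≤ 2 * (x - y) := by linarith

lemma le_two_mul_sub_padicValNat {p n j : ℕ} [Fact p.Prime] (hn : 1 ≤ n) (hj : n + 1 ≤ 2 * j) :
    (n + 1 : ℝ) - Real.logb p ((n + 1) / 2) ≤ 2 * j - padicValNat p j := by
  have hval : (padicValNat p j : ℝ) ≤ Real.logb p j :=
    (Nat.cast_le.mpr (padicValNat_le_nat_log j)).trans (Real.natLog_le_logb j p)
  have hn' : (1 : ℝ) ≤ n := by exact_mod_cast hn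
  have hj' : (n + 1 : ℝ) ≤ 2 * j := by exact_mod_cast hj
  have := Real.logb_sub_logb_le_two_mul_sub (b := p) (x := j) (y := (n + 1) / 2)
    (by exact_mod_cast (Fact.out : p.Prime).two_le) (by linarith) (by linarith)
  linarith

theorem le_padicValRat_sum_Icc_pow_add_pow_div {p : ℕ} [Fact p.Prime] {x y s : ℚ}
    (hsum : x + y = s) (hprod : x * y = s) (hvs : 2 ≤ padicValRat p s) {n : ℕ} (hn : 1 ≤ n) :
    (n + 1 : ℝ) - Real.logb p ((n + 1) / 2) ≤
      padicValRat p (∑ k ∈ Icc 1 n, (x ^ k + y ^ k) / k) := by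
  have hs : s ≠ 0 := by
    rintro rfl
    simp at hvs
  have hS := sum_Icc_pow_add_pow_div_ne_zero hsum hprod hs (by omega : n ≠ 0)
  rw [sum_Icc_pow_add_pow_div_eq_sum_truncLogCoeff hsum hprod] at hS ⊢
  refine (Int.le_ceil _).trans
    (Int.cast_le.mpr (padicValRat.le_sum_of_le (fun q hq hne => ?_) hS))
  obtain ⟨j, m⟩ := q
  rw [HasAntidiagonal.mem_antidiagonal] at hq
  have hg : truncLogCoeff ℚ j m ≠ 0 := left_ne_zero_of_mul hne
  have hmj : m < j := lt_of_not_ge fun h => hg (truncLogCoeff_eq_zero_of_le h)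
  have hcoeff : -(padicValNat p j : ℝ) ≤ padicValRat p (truncLogCoeff ℚ j m) := by
    exact_mod_cast neg_padicValNat_le_padicValRat_truncLogCoeff hg
  have hpow : (2 * j : ℝ) ≤ j * padicValRat p s := by
    have : (2 : ℝ) ≤ padicValRat p s := by exact_mod_cast hvs
    nlinarith
  have := le_two_mul_sub_padicValNat (p := p) hn (by omega : n + 1 ≤ 2 * j)
  rw [padicValRat.mul hg (pow_ne_zero _ hs), padicValRat.pow, Int.ceil_le]
  push_cast
  linarith

/-- Main lower bound: `v_p(S_n) ≥ (n+1) - log_p((n+1)/2)`. -/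
theorem stmt0 (p : ℕ) (hp : p.Prime) (a : ℤ) (ha : ¬ (p : ℤ) ∣ a) (n : ℕ) (hn : 1 ≤ n) :
    ((n : ℝ) + 1) - Real.logb p (((n : ℝ) + 1) / 2) ≤
      (padicValRat p (∑ k ∈ Finset.Icc 1 n,
        (1 / (a : ℚ) ^ k + 1 / ((p : ℚ) - (a : ℚ)) ^ k) * (p : ℚ) ^ k / (k : ℚ)) : ℝ) := by
  have := Fact.mk hp
  have hb : ¬ (p : ℤ) ∣ a * (p - a) := fun h =>
    ((Nat.prime_iff_prime_int.mp hp).dvd_mul.mp h).elim ha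
      fun h' => ha ((dvd_sub_right dvd_rfl).mp h')
  have hb0 : (a : ℚ) * (p - a) ≠ 0 := by
    have : a * (p - a) ≠ 0 := fun h => hb (h ▸ dvd_zero _)
    exact_mod_cast this
  obtain ⟨ha0, hpa0⟩ := mul_ne_zero_iff.mp hb0
  have hs := padicValRat.prime_pow_div_of_not_dvd 2 hb
  push_cast at hs
  have key := le_padicValRat_sum_Icc_pow_add_pow_div (x := p / a) (y := p / (p - a))
    (by field_simp; ring) (by field_simp) hs.ge hn
  convert key using 4 with k
  rw [div_pow, div_pow]
  ring
end

section
/- Let p be a prime, (r_n)_{n≥1} a sequence of nonzero rational numbers whose partial sums s_n are nonzero with (v_p(s_n))_{n≥1} unbounded from above, and (ℓ_k)_{k≥2} a strictly increasing real sequence with ℓ_k ≤ v_p(r_k) for all k ≥ 2. Then for every positive integer n: v_p(s_n) ≥ ℓ_{n+1}, and equality v_p(s_n) = ℓ_{n+1} holds if and only if inf_{k ≥ n+1} v_p(r_k) = ℓ_{n+1}. -/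
/-!
Take `m > n` with `v_p(s_m) > v_p(s_n)`, which exists because `v_p(s_m)` is unbounded. Writing
`s_n = s_m - (r_{n+1} + ⋯ + r_m)`, the ultrametric inequality forces
`v_p(s_n) ≥ v_p(r_{n+1} + ⋯ + r_m) ≥ min_{n < k ≤ m} v_p(r_k) ≥ ℓ_{n+1}`.
For the equality case, `s_{n+1} = s_n + r_{n+1}` has valuation `≥ ℓ_{n+2} > ℓ_{n+1}`, so `s_n` and
`r_{n+1}` both have valuation `ℓ_{n+1}` or neither does; and the infimum of the tail valuations is
`ℓ_{n+1}` exactly when it is attained at `k = n + 1`, since the later terms are `≥ ℓ_{n+2}`.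
-/

theorem exists_gt_lt_of_forall_exists_lt {α : Type*} [LinearOrder α] {f : ℕ → α}
    (hf : ∀ M, ∃ m, M < f m) (n : ℕ) : ∃ m, n < m ∧ f n < f m := by
  obtain ⟨m, hm⟩ := hf ((Finset.range (n + 1)).sup' Finset.nonempty_range_add_one f)
  refine ⟨m, ?_, (Finset.le_sup' f (Finset.self_mem_range_succ n)).trans_lt hm⟩
  by_contra! hmn
  exact (Finset.le_sup' f (Finset.mem_range_succ_iff.mpr hmn)).not_gt hm

theorem csInf_image_setOf_le_eq_iff {ι α : Type*} [PartialOrder ι]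
    [ConditionallyCompleteLinearOrder α] {f : ι → α} {n : ι} {c d : α} (hcd : c < d)
    (hn : c ≤ f n) (htail : ∀ k, n < k → d ≤ f k) :
    sInf (f '' {k | n ≤ k}) = c ↔ f n = c := by
  have hmem : f n ∈ f '' {k | n ≤ k} := ⟨n, le_rfl, rfl⟩
  have hlower : ∀ b, b ≤ f n → b ≤ d → b ∈ lowerBounds (f '' {k | n ≤ k}) := by
    rintro b hbn hbd _ ⟨k, hk, rfl⟩
    rcases (show n ≤ k from hk).eq_or_lt with rfl | hlt
    · exact hbn
    · exact hbd.trans (htail k hlt)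
  constructor
  · intro hinf
    have hmin : min (f n) d ≤ c :=
      hinf ▸ le_csInf ⟨_, hmem⟩ (hlower _ (min_le_left _ _) (min_le_right _ _))
    exact le_antisymm ((min_le_iff.mp hmin).resolve_right hcd.not_ge) hn
  · intro hfn
    exact (IsLeast.csInf_eq ⟨hmem, hlower _ le_rfl (hfn ▸ hcd.le)⟩).trans hfn

namespace padicValRat

variable {p : ℕ} [Fact p.Prime]

theorem le_sum_of_forall_le {ι : Type*} {F : ι → ℚ} {s : Finset ι} {c : ℝ}
    (hF : ∀ i ∈ s, c ≤ padicValRat p (F i)) (hs : ∑ i ∈ s, F i ≠ 0) :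
    c ≤ padicValRat p (∑ i ∈ s, F i) := by
  classical
  induction s using Finset.induction_on with
  | empty => simp at hs
  | insert a s ha ih =>
    rw [Finset.sum_insert ha] at hs ⊢
    have hFa := hF a (Finset.mem_insert_self a s)
    by_cases hs0 : ∑ i ∈ s, F i = 0
    · rwa [hs0, add_zero]
    have hmin : c ≤ min (padicValRat p (F a)) (padicValRat p (∑ i ∈ s, F i)) := by
      push_cast
      exact le_min hFa (ih (fun i hi => hF i (Finset.mem_insert_of_mem hi)) hs0)
    exact hmin.trans (mod_cast min_le_padicValRat_add hs)

theorem le_of_lt_add {q t : ℚ} (hq : q ≠ 0) (h : padicValRat p q < padicValRat p (q + t)) :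
    padicValRat p t ≤ padicValRat p q := by
  have hmin := min_le_padicValRat_add (p := p) (q := q + t) (r := -t) (by simpa using hq)
  rw [add_neg_cancel_right, padicValRat.neg] at hmin
  exact (min_le_iff.mp hmin).resolve_left h.not_ge

theorem eq_iff_eq_of_lt_add {x y : ℚ} (hx : x ≠ 0) (hy : y ≠ 0) {c : ℝ}
    (hcx : c ≤ padicValRat p x) (hcy : c ≤ padicValRat p y) (hc : c < padicValRat p (x + y)) :
    (padicValRat p x : ℝ) = c ↔ (padicValRat p y : ℝ) = c := by
  by_cases hxy : x + y = 0
  · rw [eq_neg_of_add_eq_zero_right hxy, padicValRat.neg]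
  have key : ∀ {a b : ℚ}, a ≠ 0 → b ≠ 0 → a + b ≠ 0 → c ≤ padicValRat p b →
      c < padicValRat p (a + b) → (padicValRat p a : ℝ) = c → (padicValRat p b : ℝ) = c := by
    intro a b ha hb hab hcb hc hac
    by_contra hbc
    have hlt : padicValRat p a < padicValRat p b := by
      exact_mod_cast hac.trans_lt (lt_of_le_of_ne hcb (Ne.symm hbc))
    rw [add_eq_of_lt hab ha hb hlt, hac] at hc
    exact hc.false
  exact ⟨key hx hy hxy hcy hc,
    key hy hx (by rwa [add_comm]) hcx (by rwa [add_comm])⟩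

end padicValRat

theorem le_padicValRat_sum_Icc {p : ℕ} [Fact p.Prime] (r : ℕ → ℚ) (n : ℕ)
    (hs : ∑ k ∈ Finset.Icc 1 n, r k ≠ 0)
    (hub : ∀ M : ℤ, ∃ m, M < padicValRat p (∑ k ∈ Finset.Icc 1 m, r k))
    {c : ℝ} (hc : ∀ k, n < k → c ≤ padicValRat p (r k)) :
    c ≤ padicValRat p (∑ k ∈ Finset.Icc 1 n, r k) := by
  obtain ⟨m, hnm, hval⟩ := exists_gt_lt_of_forall_exists_lt hub n
  have hsplit : ∑ k ∈ Finset.Icc 1 m, r k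
      = ∑ k ∈ Finset.Icc 1 n, r k + ∑ k ∈ Finset.Icc (n + 1) m, r k := by
    simp only [Finset.Icc_add_one_left_eq_Ioc]
    exact (Finset.sum_Ioc_consecutive r n.zero_le hnm.le).symm
  rw [hsplit] at hval
  have htail : ∑ k ∈ Finset.Icc (n + 1) m, r k ≠ 0 := by
    intro h
    rw [h, add_zero] at hval
    exact hval.false
  calc c ≤ padicValRat p (∑ k ∈ Finset.Icc (n + 1) m, r k) :=
        padicValRat.le_sum_of_forall_le (fun k hk => hc k (Finset.mem_Icc.mp hk).1) htail
    _ ≤ padicValRat p (∑ k ∈ Finset.Icc 1 n, r k) := mod_cast padicValRat.le_of_lt_add hs hval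

/-- Lower bound `v_p(s_n) ≥ ℓ_{n+1}` and the equality criterion
`v_p(s_n) = ℓ_{n+1} ↔ inf_{k ≥ n+1} v_p(r_k) = ℓ_{n+1}`. -/
theorem stmt3 (p : ℕ) (hp : p.Prime) (r : ℕ → ℚ) (hr : ∀ k, 1 ≤ k → r k ≠ 0)
    (hs : ∀ n, 1 ≤ n → (∑ k ∈ Finset.Icc 1 n, r k) ≠ 0)
    (hub : ∀ M : ℤ, ∃ n, 1 ≤ n ∧ M < padicValRat p (∑ k ∈ Finset.Icc 1 n, r k))
    (ℓ : ℕ → ℝ) (hℓmono : StrictMonoOn ℓ {k : ℕ | 2 ≤ k})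
    (hℓ : ∀ k, 2 ≤ k → ℓ k ≤ (padicValRat p (r k) : ℝ))
    (n : ℕ) (hn : 1 ≤ n) :
    ℓ (n + 1) ≤ (padicValRat p (∑ k ∈ Finset.Icc 1 n, r k) : ℝ) ∧
      ((padicValRat p (∑ k ∈ Finset.Icc 1 n, r k) : ℝ) = ℓ (n + 1) ↔
        sInf ((fun k => (padicValRat p (r k) : ℝ)) '' {k : ℕ | n + 1 ≤ k}) = ℓ (n + 1)) := by
  have : Fact p.Prime := ⟨hp⟩
  have hℓr : ∀ m, 1 ≤ m → ∀ k, m < k → ℓ (m + 1) ≤ padicValRat p (r k) := fun m hm k hk =>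
    (hℓmono.monotoneOn (by simp; omega) (by simp; omega)
      hk).trans (hℓ k (by omega))
  have hlb : ∀ m, 1 ≤ m → ℓ (m + 1) ≤ padicValRat p (∑ k ∈ Finset.Icc 1 m, r k) :=
    fun m hm => le_padicValRat_sum_Icc r m (hs m hm) (fun M => (hub M).imp fun _ h => h.2)
      (hℓr m hm)
  have hℓlt : ℓ (n + 1) < ℓ (n + 2) :=
    hℓmono (by simp; omega) (by simp) (by omega)
  refine ⟨hlb n hn, ?_⟩
  rw [csInf_image_setOf_le_eq_iff (f := fun k => (padicValRat p (r k) : ℝ)) hℓlt (hℓ _ (by omega)) (hℓr (n + 1) (by omega))]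
  refine padicValRat.eq_iff_eq_of_lt_add (hs n hn) (hr _ (by omega)) (hlb n hn)
    (hℓ _ (by omega)) ?_
  rw [← Finset.sum_Icc_succ_top (by omega)]
  exact hℓlt.trans_le (hlb (n + 1) (by omega))
end

section
/- Let p be a prime and a an integer not divisible by p. Then for every positive integer n, v_p(Σ_{k=1}^{n} (1/a^k + 1/(p-a)^k) · p^k/k) ≥ n + 1 - ⌊log_p(n)⌋. -/
/-!
With `x = p / a` and `y = p / (p - a)` we have `1 / x + 1 / y = 1`, i.e. `x + y = x * y =: t`, and
`v_p(t) = 2`. Waring's formula expresses `x ^ k + y ^ k` as a polynomial in `t`; summing `1 / k`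
times it over `k ≤ n`, Pascal's rule telescopes the coefficients into
`∑_{k ≤ n} (x ^ k + y ^ k) / k = ∑_{r + j = n} (-1) ^ r C(j - 1, r) t ^ j / j`.
Only terms with `r < j`, i.e. `2 j ≥ n + 1`, survive, and each has valuation at least
`2 j - ⌊log_p n⌋`. The sum is nonzero by a sign argument: if `t > 0` then `x, y > 0`, and if `t < 0`
every term of the closed form has the sign of `(-1) ^ n`.
-/

open Finset

section PowerSums

variable {K : Type*} [Field K] [CharZero K]

/-- `m * waringSum t m` is Waring's expression for `x ^ m + y ^ m` when `x + y = x * y = t`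
(for `m ≠ 0`); the `j = 0` term is `0` through division by zero. -/
def waringSum (t : K) (m : ℕ) : K :=
  ∑ rj ∈ antidiagonal m, (-1) ^ rj.1 * rj.2.choose rj.1 * t ^ rj.2 / rj.2

lemma add_two_mul_choose_succ_succ_div {r j : ℕ} (h : r + j ≠ 0) :
    ((r + j + 2 : ℕ) : K) * (j + 1).choose (r + 1) / (j + 1 : ℕ)
      = (r + j + 1 : ℕ) * j.choose (r + 1) / j + (r + j : ℕ) * j.choose r / j := by
  rcases Nat.eq_zero_or_pos j with rfl | hj
  · simp [Nat.choose_eq_zero_of_lt (show 1 < r + 1 by omega)]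
  have hpascal : ((j + 1).choose (r + 1) : K) = j.choose r + j.choose (r + 1) := by
    exact_mod_cast Nat.choose_succ_succ' j r
  have habsorb : ((j + 1 : ℕ) : K) * j.choose r = (j + 1).choose (r + 1) * (r + 1 : ℕ) := by
    exact_mod_cast Nat.add_one_mul_choose_eq j r
  have hj' : (j : K) ≠ 0 := by exact_mod_cast hj.ne'
  rw [hpascal] at habsorb ⊢
  field_simp
  push_cast at habsorb ⊢
  linear_combination habsorb

lemma waringSum_add_two (t : K) {m : ℕ} (hm : m ≠ 0) :
    (m + 2 : ℕ) * waringSum t (m + 2)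
      = t * ((m + 1 : ℕ) * waringSum t (m + 1) - m * waringSum t m) := by
  simp only [waringSum]
  rw [Nat.sum_antidiagonal_succ', Nat.sum_antidiagonal_succ, Nat.sum_antidiagonal_succ]
  have hterm : ∀ rj ∈ antidiagonal m,
      ((m + 2 : ℕ) : K)
          * ((-1) ^ (rj.1 + 1) * (rj.2 + 1).choose (rj.1 + 1) * t ^ (rj.2 + 1) / (rj.2 + 1 : ℕ))
        = t * (m + 1 : ℕ) * ((-1) ^ (rj.1 + 1) * rj.2.choose (rj.1 + 1) * t ^ rj.2 / rj.2)
          - t * m * ((-1) ^ rj.1 * rj.2.choose rj.1 * t ^ rj.2 / rj.2) := by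
    rintro ⟨r, j⟩ hrj
    rw [HasAntidiagonal.mem_antidiagonal] at hrj
    subst hrj
    have := add_two_mul_choose_succ_succ_div (K := K) hm
    simp only [pow_succ]
    linear_combination (-(-1) ^ r * t ^ j * t) * this
  have hsum := sum_congr rfl hterm
  rw [← mul_sum, sum_sub_distrib, ← mul_sum, ← mul_sum] at hsum
  dsimp only
  simp only [Nat.cast_zero, div_zero, zero_add, pow_zero, one_mul, Nat.choose_zero_right,
    Nat.cast_one, mul_one]
  have h2 : ((m + 2 : ℕ) : K) ≠ 0 := Nat.cast_ne_zero.mpr (by omega)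
  have h1 : ((m + 1 : ℕ) : K) ≠ 0 := Nat.cast_ne_zero.mpr (by omega)
  field_simp
  linear_combination hsum

theorem pow_add_pow_eq_mul_waringSum {x y : K} (h : x + y = x * y) {m : ℕ} (hm : m ≠ 0) :
    x ^ m + y ^ m = m * waringSum (x * y) m := by
  obtain ⟨k, rfl⟩ := Nat.exists_eq_succ_of_ne_zero hm
  induction k using Nat.twoStepInduction with
  | zero => simp [waringSum, Nat.sum_antidiagonal_succ, h]
  | one =>
    simp [waringSum, Nat.sum_antidiagonal_succ]
    field_simp
    linear_combination (x + y + x * y) * h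
  | more k ih₁ ih₂ =>
    have hrec : x ^ (k + 3) + y ^ (k + 3)
        = x * y * ((x ^ (k + 2) + y ^ (k + 2)) - (x ^ (k + 1) + y ^ (k + 1))) := by
      linear_combination (x ^ (k + 2) + y ^ (k + 2)) * h
    rw [hrec, ih₁ (by omega), ih₂ (by omega), waringSum_add_two _ (by omega : k + 1 ≠ 0)]

theorem sum_pow_add_pow_div_eq {x y : K} (h : x + y = x * y) (n : ℕ) :
    ∑ k ∈ Icc 1 n, (x ^ k + y ^ k) / k
      = ∑ rj ∈ antidiagonal n, (-1) ^ rj.1 * (rj.2 - 1).choose rj.1 * (x * y) ^ rj.2 / rj.2 := by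
  induction n with
  | zero => simp
  | succ n ih =>
    have hn : ((n + 1 : ℕ) : K) ≠ 0 := Nat.cast_ne_zero.mpr n.succ_ne_zero
    rw [sum_Icc_succ_top (by omega), ih, pow_add_pow_eq_mul_waringSum h n.succ_ne_zero,
      mul_div_cancel_left₀ _ hn, waringSum, Nat.sum_antidiagonal_succ, Nat.sum_antidiagonal_succ,
      add_left_comm, ← sum_add_distrib]
    congr 1
    · simp
    refine sum_congr rfl fun ⟨r, j⟩ _ => ?_
    rcases j with _ | i
    · simp
    dsimp only
    rw [Nat.add_sub_cancel, Nat.choose_succ_succ', pow_succ]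
    push_cast
    ring

end PowerSums

theorem sum_pow_add_pow_div_ne_zero {K : Type*} [Field K] [LinearOrder K] [IsStrictOrderedRing K]
    {x y : K} (h : x + y = x * y) (hxy : x * y ≠ 0) {n : ℕ} (hn : n ≠ 0) :
    ∑ k ∈ Icc 1 n, (x ^ k + y ^ k) / k ≠ 0 := by
  rcases hxy.lt_or_gt with hneg | hpos
  · suffices 0 < (-1) ^ n * ∑ k ∈ Icc 1 n, (x ^ k + y ^ k) / k by
      rintro h0; simp [h0] at this
    rw [sum_pow_add_pow_div_eq h, mul_sum]
    have hterm : ∀ rj ∈ antidiagonal n,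
        (-1) ^ n * ((-1) ^ rj.1 * (rj.2 - 1).choose rj.1 * (x * y) ^ rj.2 / rj.2)
          = (rj.2 - 1).choose rj.1 * (-(x * y)) ^ rj.2 / rj.2 := by
      rintro ⟨r, j⟩ hrj
      rw [HasAntidiagonal.mem_antidiagonal] at hrj
      subst hrj
      have hsign : (-1 : K) ^ (r + j) * (-1) ^ r = (-1) ^ j := by
        rw [pow_add, mul_right_comm, ← pow_add, ← two_mul, pow_mul]
        simp
      rw [neg_pow (x * y)]
      linear_combination ((j - 1).choose r * (x * y) ^ j / j : K) * hsign
    rw [sum_congr rfl hterm]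
    refine sum_pos' (fun rj _ => by have := neg_pos.mpr hneg; positivity) ⟨(0, n), by simp, ?_⟩
    have := neg_pos.mpr hneg
    have : (0 : K) < n := by exact_mod_cast Nat.pos_of_ne_zero hn
    simp only [Nat.choose_zero_right, Nat.cast_one, one_mul]
    positivity
  · have hx : 0 < x ∧ 0 < y := by
      rcases mul_pos_iff.mp hpos with hxy | hxy
      · exact hxy
      · linarith [hxy.1, hxy.2]
    refine (sum_pos (fun k hk => ?_) ⟨1, by simp; omega⟩).ne'
    have : (0 : K) < k := by exact_mod_cast (mem_Icc.mp hk).1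
    have := hx.1; have := hx.2
    positivity

namespace padicValRat

variable {p : ℕ} [Fact p.Prime]

theorem le_sum {ι : Type*} {s : Finset ι} {f : ι → ℚ} {v : ℤ}
    (hf : ∀ i ∈ s, f i ≠ 0 → v ≤ padicValRat p (f i)) (hs : ∑ i ∈ s, f i ≠ 0) :
    v ≤ padicValRat p (∑ i ∈ s, f i) := by
  classical
  induction s using Finset.induction_on with
  | empty => simp at hs
  | insert i s hi ih =>
    rw [sum_insert hi] at hs ⊢
    have ih' := fun hs' => ih (fun j hj => hf j (mem_insert_of_mem hj)) hs'
    by_cases hfi : f i = 0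
    · rw [hfi, zero_add] at hs ⊢
      exact ih' hs
    by_cases hsum : ∑ j ∈ s, f j = 0
    · rw [hsum, add_zero]
      exact hf i (mem_insert_self i s) hfi
    exact (le_min (hf i (mem_insert_self i s) hfi) (ih' hsum)).trans (min_le_padicValRat_add hs)

theorem prime_div_of_not_dvd {a : ℤ} (ha : ¬ (p : ℤ) ∣ a) : padicValRat p (p / a) = 1 := by
  have ha0 : (a : ℚ) ≠ 0 := Int.cast_ne_zero.mpr (by rintro rfl; exact ha (dvd_zero _))
  rw [padicValRat.div (Nat.cast_ne_zero.mpr (Fact.out : p.Prime).ne_zero) ha0,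
    padicValRat.self (Fact.out : p.Prime).one_lt, padicValRat.of_int,
    padicValInt.eq_zero_of_not_dvd ha, Nat.cast_zero, sub_zero]

end padicValRat

theorem le_padicValRat_choose_mul_pow_div {p : ℕ} [Fact p.Prime] {t : ℚ}
    (ht : padicValRat p t = 2) {n r j : ℕ} (hrj : r + j = n)
    (hne : (-1) ^ r * (j - 1).choose r * t ^ j / j ≠ 0) :
    (n : ℤ) + 1 - Nat.log p n ≤ padicValRat p ((-1) ^ r * (j - 1).choose r * t ^ j / j) := by
  have ht0 : t ≠ 0 := by rintro rfl; simp at ht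
  have hj : j ≠ 0 := by rintro rfl; simp at hne
  have hc : (j - 1).choose r ≠ 0 := by rintro hc; simp [hc] at hne
  have hrj' : r < j := by have := Nat.choose_eq_zero_iff.not.mp hc; omega
  have hvj : padicValRat p j ≤ Nat.log p n := by
    rw [padicValRat.of_nat]
    exact_mod_cast (padicValNat_le_nat_log j).trans (Nat.log_mono_right (by omega))
  rw [padicValRat.div (div_ne_zero_iff.mp hne).1 (by simpa using hj),
    padicValRat.mul (by simp [hc]) (pow_ne_zero _ ht0),
    padicValRat.mul (by simp) (by simpa using hc),
    padicValRat.pow, padicValRat.pow, ht, padicValRat.neg, padicValRat.one, padicValRat.of_nat]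
  omega

/-- The weaker lower bound `v_p(S_n) ≥ n + 1 - ⌊log_p n⌋`. -/
theorem stmt5 (p : ℕ) (hp : p.Prime) (a : ℤ) (ha : ¬ (p : ℤ) ∣ a) (n : ℕ) (hn : 1 ≤ n) :
    (n : ℤ) + 1 - (Nat.log p n : ℤ) ≤
      padicValRat p (∑ k ∈ Finset.Icc 1 n,
        (1 / (a : ℚ) ^ k + 1 / ((p : ℚ) - (a : ℚ)) ^ k) * (p : ℚ) ^ k / (k : ℚ)) := by
  have : Fact p.Prime := ⟨hp⟩
  have hb : ¬ (p : ℤ) ∣ p - a := fun h => ha (by simpa using dvd_sub (dvd_refl _) h)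
  set x : ℚ := p / a
  set y : ℚ := p / (p - a)
  have hvx : padicValRat p x = 1 := padicValRat.prime_div_of_not_dvd ha
  have hvy : padicValRat p y = 1 := by simpa using padicValRat.prime_div_of_not_dvd hb
  have hx0 : x ≠ 0 := by rintro h; simp [h] at hvx
  have hy0 : y ≠ 0 := by rintro h; simp [h] at hvy
  have hxy : x + y = x * y := by
    have ha0 : (a : ℚ) ≠ 0 := by rintro h; simp [x, h] at hx0
    have hb0 : (p : ℚ) - a ≠ 0 := by rintro h; simp [y, h] at hy0
    simp only [x, y]
    field_simp
    ring
  have hsum : ∀ k ∈ Icc 1 n,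
      (1 / (a : ℚ) ^ k + 1 / ((p : ℚ) - (a : ℚ)) ^ k) * (p : ℚ) ^ k / (k : ℚ)
        = (x ^ k + y ^ k) / k := fun k _ => by simp only [x, y, div_pow]; ring
  have hvt : padicValRat p (x * y) = 2 := by rw [padicValRat.mul hx0 hy0, hvx, hvy]; rfl
  have hne := sum_pow_add_pow_div_ne_zero hxy (mul_ne_zero hx0 hy0) (by omega : n ≠ 0)
  rw [sum_congr rfl hsum]
  rw [sum_pow_add_pow_div_eq hxy] at hne ⊢
  exact padicValRat.le_sum (fun rj hrj hterm => le_padicValRat_choose_mul_pow_div hvt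
    (HasAntidiagonal.mem_antidiagonal.mp hrj) hterm) hne
end

section
/- For any nonzero real numbers x, y with x + y ≠ 0 and any nonnegative integer n: Σ_{k=0}^{n} x^k y^{n-k} / C(n,k) = (n+1) / [(x+y)(1/x + 1/y)^{n+1}] · Σ_{k=1}^{n+1} (x^k + y^k)(1/x + 1/y)^k / k. -/
/-!
The inverse-binomial identity `1 / C(n,k) = (n+1)/(n+2) · (1 / C(n+1,k) + 1 / C(n+1,k+1))` gives
the first-order recurrence `(n+1)(x+y) S(n+1) = (n+2) x y S(n) + (n+1)(x^(n+2) + y^(n+2))` for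
`S(n) = ∑ x^k y^(n-k) / C(n,k)`. Since `x y s = x + y` for `s = 1/x + 1/y`, the rescaled quantity
`(x+y) s^(n+1) S(n) / (n+1)` then increases by exactly `(x^(n+2) + y^(n+2)) s^(n+2) / (n+2)` at each
step, so it telescopes to the sum on the right.
-/

open Finset

theorem Nat.add_two_div_choose {K : Type*} [Field K] [CharZero K] {n k : ℕ} (hk : k ≤ n) :
    ((n : K) + 2) / n.choose k =
      ((n : K) + 1) * (1 / (n + 1).choose k + 1 / (n + 1).choose (k + 1)) := by
  have h₀ : (n.choose k : K) ≠ 0 := by exact_mod_cast (Nat.choose_pos hk).ne'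
  have h₁ : ((n + 1).choose k : K) ≠ 0 := by exact_mod_cast (Nat.choose_pos (by omega)).ne'
  have h₂ : ((n + 1).choose (k + 1) : K) ≠ 0 := by
    exact_mod_cast (Nat.choose_pos (by omega)).ne'
  have hsucc : ((n : K) + 1) * n.choose k = (n + 1).choose (k + 1) * ((k : K) + 1) := by
    exact_mod_cast Nat.add_one_mul_choose_eq n k
  have hsame : (n.choose k : K) * ((n : K) + 1) = (n + 1).choose k * ((n : K) + 1 - k) := by
    have := congrArg (Nat.cast (R := K)) (Nat.choose_mul_succ_eq n k)
    push_cast [Nat.cast_sub (show k ≤ n + 1 by omega)] at this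
    exact this
  field_simp
  linear_combination (-(n + 1).choose (k + 1) : K) * hsame - ((n + 1).choose k : K) * hsucc

variable {K : Type*} [Field K]

def invChooseSum (x y : K) (n : ℕ) : K :=
  ∑ k ∈ range (n + 1), x ^ k * y ^ (n - k) / n.choose k

theorem invChooseSum_succ [CharZero K] (x y : K) (n : ℕ) :
    ((n : K) + 1) * (x + y) * invChooseSum x y (n + 1) =
      ((n : K) + 2) * (x * y) * invChooseSum x y n +
        ((n : K) + 1) * (x ^ (n + 2) + y ^ (n + 2)) := by
  set U := ∑ k ∈ range (n + 1), x ^ k * y ^ (n - k) / (n + 1).choose k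
  set V := ∑ k ∈ range (n + 1), x ^ k * y ^ (n - k) / (n + 1).choose (k + 1)
  have hsplit : ((n : K) + 2) * invChooseSum x y n = ((n : K) + 1) * (U + V) := by
    simp only [invChooseSum, U, V, ← sum_add_distrib, mul_sum]
    refine sum_congr rfl fun k hk => ?_
    have := Nat.add_two_div_choose (K := K) (Nat.lt_succ_iff.mp (mem_range.mp hk))
    linear_combination x ^ k * y ^ (n - k) * this
  have hU : y * U = invChooseSum x y (n + 1) - x ^ (n + 1) := by
    rw [invChooseSum, sum_range_succ, Nat.sub_self, Nat.choose_self, mul_sum]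
    simp only [pow_zero, Nat.cast_one, mul_one, div_one, add_sub_cancel_right]
    refine sum_congr rfl fun k hk => ?_
    rw [Nat.sub_add_comm (Nat.lt_succ_iff.mp (mem_range.mp hk)), pow_succ]
    ring
  have hV : x * V = invChooseSum x y (n + 1) - y ^ (n + 1) := by
    rw [invChooseSum, sum_range_succ', mul_sum]
    simp only [pow_zero, Nat.choose_zero_right, Nat.cast_one, one_mul, div_one, Nat.sub_zero,
      add_sub_cancel_right, Nat.add_sub_add_right]
    refine sum_congr rfl fun k _ => ?_
    ring
  linear_combination -(x * y) * hsplit - ((n : K) + 1) * x * hU - ((n : K) + 1) * y * hV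

theorem mul_mul_one_div_add_one_div {x y : K} (hx : x ≠ 0) (hy : y ≠ 0) :
    x * y * (1 / x + 1 / y) = x + y := by
  field_simp
  ring

theorem invChooseSum_eq_sum_Icc [CharZero K] {x y : K} (hx : x ≠ 0) (hy : y ≠ 0) (n : ℕ) :
    (x + y) * (1 / x + 1 / y) ^ (n + 1) * invChooseSum x y n / ((n : K) + 1) =
      ∑ k ∈ Icc 1 (n + 1), (x ^ k + y ^ k) * (1 / x + 1 / y) ^ k / k := by
  have hs := mul_mul_one_div_add_one_div hx hy
  generalize 1 / x + 1 / y = s at hs ⊢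
  induction n with
  | zero => simp [invChooseSum, ← hs]
  | succ n ih =>
    rw [sum_Icc_succ_top (by omega), ← ih]
    have hn₁ : (n : K) + 1 ≠ 0 := Nat.cast_add_one_ne_zero n
    have hn₂ : (n : K) + 1 + 1 ≠ 0 := by exact_mod_cast Nat.succ_ne_zero (n + 1)
    push_cast
    field_simp
    linear_combination s ^ (n + 2) * invChooseSum_succ x y n
      + ((n : K) + 2) * invChooseSum x y n * s ^ (n + 1) * hs

/-- Mansour's combinatorial identity. -/
theorem stmt6 (x y : ℝ) (hx : x ≠ 0) (hy : y ≠ 0) (hxy : x + y ≠ 0) (n : ℕ) :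
    ∑ k ∈ Finset.range (n + 1), x ^ k * y ^ (n - k) / (n.choose k : ℝ) =
      ((n : ℝ) + 1) / ((x + y) * (1 / x + 1 / y) ^ (n + 1)) *
        ∑ k ∈ Finset.Icc 1 (n + 1), (x ^ k + y ^ k) * (1 / x + 1 / y) ^ k / (k : ℝ) := by
  have hs : 1 / x + 1 / y ≠ 0 := fun h => hxy <| by
    rw [← mul_mul_one_div_add_one_div hx hy, h, mul_zero]
  have hA : (x + y) * (1 / x + 1 / y) ^ (n + 1) ≠ 0 := mul_ne_zero hxy (pow_ne_zero _ hs)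
  change invChooseSum x y n = _
  rw [← invChooseSum_eq_sum_Icc hx hy]
  generalize (x + y) * (1 / x + 1 / y) ^ (n + 1) = A at hA ⊢
  field_simp
end

section
/- For every nonnegative integer n: lcm{C(n,0), C(n,1), ..., C(n,n)} = lcm(1, 2, ..., n+1) / (n+1). -/
/-!
By `(n + 1) * C(n, k) = (k + 1) * C(n + 1, k + 1)`, the claim amounts to
`lcm_{1 ≤ j ≤ m} j * C(m, j) = lcm(1, …, m)` for `m = n + 1`. By Kummer's theorem the `p`-adic
valuation of `C(m, j)` counts the carries when adding `j` and `m - j` in base `p`; none occurs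
in the lowest `v_p(j)` digits, so `v_p(j * C(m, j)) ≤ log_p m`, the `p`-adic valuation of
`lcm(1, …, m)`.
-/

open Finset

theorem Finset.lcm_mul_left {α ι : Type*} [CommMonoidWithZero α] [StrongNormalizedGCDMonoid α]
    {s : Finset ι} (hs : s.Nonempty) (a : α) (f : ι → α) :
    s.lcm (fun i => a * f i) = normalize a * s.lcm f := by
  induction hs using Nonempty.cons_induction with
  | singleton i => simp
  | cons i s _ _ ih =>
    classical
    rw [cons_eq_insert, lcm_insert, lcm_insert, ih, ← _root_.lcm_mul_left]
    exact lcm_eq_of_associated_right ((normalize_associated a).mul_right _) _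

namespace Nat

theorem factorization_choose_add_factorization_le_log {p n k : ℕ} (hkn : k ≤ n) (hk0 : k ≠ 0) :
    (choose n k).factorization p + k.factorization p ≤ log p n := by
  by_cases hp : p.Prime
  swap
  · simp [factorization_eq_zero_of_not_prime _ hp]
  -- No carry occurs in a position `i` with `p ^ i ∣ k`.
  have hdisj : Disjoint {i ∈ Ico 1 (log p n + 1) | p ^ i ≤ k % p ^ i + (n - k) % p ^ i}
      {i ∈ Ico 1 (log p n + 1) | p ^ i ∣ k} := by
    simp +contextual [Finset.disjoint_right, dvd_iff_mod_eq_zero, Nat.mod_lt _ (pow_pos hp.pos _)]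
  have hk : k < p ^ (log p n + 1) := hkn.trans_lt (lt_pow_succ_log_self hp.one_lt n)
  rw [factorization_choose hp hkn (lt_add_one _),
    factorization_eq_card_pow_dvd_of_lt hp (pos_of_ne_zero hk0) hk,
    ← card_union_of_disjoint hdisj, filter_union_right]
  exact (card_filter_le _ _).trans_eq (card_Ico _ _)

theorem dvd_lcm_Icc_of_factorization_le_log {d m : ℕ} (hd : d ≠ 0)
    (h : ∀ p, p.Prime → d.factorization p ≤ log p m) : d ∣ (Icc 1 m).lcm id := by
  have hL : (Icc 1 m).lcm id ≠ 0 := by simp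
  rw [← factorization_prime_le_iff_dvd hd hL]
  intro p hp
  have hpow : p ^ log p m ∣ (Icc 1 m).lcm id := by
    by_cases hm : m = 0
    · simp [hm]
    exact dvd_lcm (mem_Icc.2 ⟨one_le_pow _ _ hp.pos, pow_log_le_self p hm⟩)
  exact (h p hp).trans ((hp.pow_dvd_iff_le_factorization hL).1 hpow)

theorem mul_choose_dvd_lcm_Icc {n k : ℕ} (hkn : k ≤ n) (hk0 : k ≠ 0) :
    k * n.choose k ∣ (Icc 1 n).lcm id := by
  refine dvd_lcm_Icc_of_factorization_le_log (mul_ne_zero hk0 (choose_pos hkn).ne') fun p _ => ?_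
  rw [factorization_mul hk0 (choose_pos hkn).ne', Finsupp.add_apply, add_comm]
  exact factorization_choose_add_factorization_le_log hkn hk0

theorem lcm_Icc_mul_choose (n : ℕ) :
    (Icc 1 n).lcm (fun k => k * n.choose k) = (Icc 1 n).lcm id := by
  refine dvd_antisymm (Finset.lcm_dvd fun k hk => ?_) (lcm_mono_fun fun k _ => dvd_mul_right k _)
  obtain ⟨hk1, hkn⟩ := mem_Icc.1 hk
  exact mul_choose_dvd_lcm_Icc hkn (one_le_iff_ne_zero.1 hk1)

end Nat

/-- `lcm{C(n,0), …, C(n,n)} = lcm(1, …, n+1) / (n+1)`. -/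
theorem stmt7 (n : ℕ) :
    Finset.lcm (Finset.range (n + 1)) (fun k => n.choose k) =
      (Finset.lcm (Finset.Icc 1 (n + 1)) id) / (n + 1) := by
  have hmul := Finset.lcm_mul_left (nonempty_range_add_one (n := n)) (n + 1) (n.choose ·)
  rw [normalize_eq] at hmul
  have key : (n + 1) * (range (n + 1)).lcm (n.choose ·) = (Icc 1 (n + 1)).lcm id := calc
    _ = (range (n + 1)).lcm (fun k => (k + 1) * (n + 1).choose (k + 1)) := by
      simp_rw [← hmul, Nat.add_one_mul_choose_eq, mul_comm]
    _ = ((Icc 0 n).image (· + 1)).lcm (fun j => j * (n + 1).choose j) := by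
      rw [lcm_image, range_eq_Ico, Ico_add_one_right_eq_Icc]
      rfl
    _ = (Icc 1 (n + 1)).lcm (fun j => j * (n + 1).choose j) := by
      rw [image_add_right_Icc, zero_add]
    _ = (Icc 1 (n + 1)).lcm id := Nat.lcm_Icc_mul_choose (n + 1)
  rw [← key, Nat.mul_div_cancel_left _ n.succ_pos]
end

section
/- Let p be a prime and a an integer not divisible by p. For every positive integer n: Σ_{k=1}^{n} (1/a^k + 1/(p-a)^k) · p^k/k = p^{n+1} / (n · (a(p-a))^n) · Σ_{k=0}^{n-1} a^k (p-a)^{n-1-k} / C(n-1, k). -/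
/-!
Put `A = a` and `B = p - a`, both nonzero because `p ∤ a`, so that `A + B = p`, and write
`T m = ∑_{k ≤ m} A^k B^(m-k) / C(m,k)`. Induct on `n = m + 1`: adding the `n+1`-st term of the
left side amounts to the recurrence
`(A + B) T (m+1) = A^(m+2) + B^(m+2) + (m+2)/(m+1) · A B · T m`, obtained by splitting
`(A + B) T (m+1)` into two sums and pairing neighbouring terms through
`1 / C(m+1,k) + 1 / C(m+1,k+1) = (m+2) / ((m+1) C(m,k))`.
-/

open Finset

section

variable {K : Type*} [Field K] [CharZero K]

theorem inv_choose_succ_add_inv_choose_succ_succ {m k : ℕ} (hk : k ≤ m) :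
    ((m + 1).choose k : K)⁻¹ + ((m + 1).choose (k + 1) : K)⁻¹ =
      (m + 2) / ((m + 1) * m.choose k) := by
  have hsucc : ((m + 1).choose (k + 1) : K) * (k + 1) = (m + 1) * m.choose k := by
    exact_mod_cast (Nat.add_one_mul_choose_eq m k).symm
  have hsame : ((m + 1).choose k : K) * (m + 1 - k) = (m + 1) * m.choose k := by
    have := congrArg (Nat.cast : ℕ → K) (Nat.choose_mul_succ_eq m k)
    push_cast [Nat.cast_sub (by omega : k ≤ m + 1)] at this
    rw [← this, mul_comm]
  have h0 : (m.choose k : K) ≠ 0 := by exact_mod_cast (Nat.choose_pos hk).ne'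
  have h1 : ((m + 1).choose k : K) ≠ 0 := by exact_mod_cast (Nat.choose_pos (by omega)).ne'
  have h2 : ((m + 1).choose (k + 1) : K) ≠ 0 := by exact_mod_cast (Nat.choose_pos (by omega)).ne'
  field_simp
  linear_combination -((m + 1).choose (k + 1) : K) * hsame - ((m + 1).choose k : K) * hsucc

def binomInvSum (A B : K) (m : ℕ) : K :=
  ∑ k ∈ range (m + 1), A ^ k * B ^ (m - k) / m.choose k

theorem add_mul_binomInvSum_succ (A B : K) (m : ℕ) :
    (A + B) * binomInvSum A B (m + 1) =
      A ^ (m + 2) + B ^ (m + 2) + (m + 2) / (m + 1) * (A * B) * binomInvSum A B m := by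
  have hAsum : A * binomInvSum A B (m + 1) =
      ∑ k ∈ range (m + 1), A ^ (k + 1) * B ^ (m + 1 - k) / (m + 1).choose k + A ^ (m + 2) := by
    rw [binomInvSum, mul_sum, sum_range_succ]
    simp only [Nat.choose_self, Nat.sub_self, pow_zero, Nat.cast_one, div_one]
    congr 1
    · exact sum_congr rfl fun k _ => by ring
    · ring
  have hBsum : B * binomInvSum A B (m + 1) =
      ∑ k ∈ range (m + 1), A ^ (k + 1) * B ^ (m + 1 - k) / (m + 1).choose (k + 1) +
        B ^ (m + 2) := by
    rw [binomInvSum, mul_sum, sum_range_succ']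
    simp only [Nat.choose_zero_right, Nat.sub_zero, pow_zero, Nat.cast_one, div_one]
    congr 1
    · refine sum_congr rfl fun k hk => ?_
      rw [show m + 1 - k = m + 1 - (k + 1) + 1 by have := mem_range.mp hk; omega]
      ring
    · ring
  have hterm : ∀ k ∈ range (m + 1),
      A ^ (k + 1) * B ^ (m + 1 - k) / (m + 1).choose k +
          A ^ (k + 1) * B ^ (m + 1 - k) / (m + 1).choose (k + 1) =
        (m + 2) / (m + 1) * (A * B) * (A ^ k * B ^ (m - k) / m.choose k) := by
    intro k hk
    have hkm : k ≤ m := Nat.lt_succ_iff.mp (mem_range.mp hk)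
    rw [div_eq_mul_inv, div_eq_mul_inv, ← mul_add,
      inv_choose_succ_add_inv_choose_succ_succ hkm, show m + 1 - k = m - k + 1 by omega]
    have h0 : (m.choose k : K) ≠ 0 := by exact_mod_cast (Nat.choose_pos hkm).ne'
    field_simp
    ring
  rw [add_mul, hAsum, hBsum, binomInvSum, mul_sum, ← sum_congr rfl hterm, sum_add_distrib]
  ring

theorem sum_Icc_inv_pow_add_inv_pow_mul_pow_div (A B : K) (hA : A ≠ 0) (hB : B ≠ 0) (m : ℕ) :
    ∑ k ∈ Icc 1 (m + 1), (1 / A ^ k + 1 / B ^ k) * (A + B) ^ k / k =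
      (A + B) ^ (m + 2) / ((m + 1) * (A * B) ^ (m + 1)) * binomInvSum A B m := by
  induction m with
  | zero =>
    rw [zero_add, Icc_self, sum_singleton, binomInvSum, range_one, sum_singleton,
      Nat.choose_self]
    field_simp
    ring
  | succ m ih =>
    have hrhs : (A + B) ^ (m + 1 + 2) / ((((m + 1 : ℕ) : K) + 1) * (A * B) ^ (m + 1 + 1)) *
          binomInvSum A B (m + 1) =
        (A + B) ^ (m + 2) / ((m + 2) * (A * B) ^ (m + 2)) *
          ((A + B) * binomInvSum A B (m + 1)) := by
      push_cast
      ring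
    rw [sum_Icc_succ_top (by omega), ih, hrhs, add_mul_binomInvSum_succ]
    have hm1 : (m + 1 : K) ≠ 0 := by exact_mod_cast m.succ_ne_zero
    have hm2 : (m + 2 : K) ≠ 0 := by exact_mod_cast (m + 1).succ_ne_zero
    push_cast
    rw [show (m : K) + 1 + 1 = m + 2 by ring]
    field_simp
    ring

end

theorem stmt8_general (p : ℕ) (a : ℤ) (ha : ¬ (p : ℤ) ∣ a) (n : ℕ) (hn : 1 ≤ n) :
    ∑ k ∈ Finset.Icc 1 n,
        (1 / (a : ℚ) ^ k + 1 / ((p : ℚ) - (a : ℚ)) ^ k) * (p : ℚ) ^ k / (k : ℚ) =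
      (p : ℚ) ^ (n + 1) / ((n : ℚ) * ((a : ℚ) * ((p : ℚ) - (a : ℚ))) ^ n) *
        ∑ k ∈ Finset.range n,
          (a : ℚ) ^ k * ((p : ℚ) - (a : ℚ)) ^ (n - 1 - k) / ((n - 1).choose k : ℚ) := by
  obtain ⟨m, rfl⟩ : ∃ m, n = m + 1 := ⟨n - 1, by omega⟩
  have ha0 : (a : ℚ) ≠ 0 := Int.cast_ne_zero.mpr (by rintro rfl; exact ha (dvd_zero _))
  have hpa : (p : ℚ) - a ≠ 0 :=
    sub_ne_zero.mpr fun h => ha ⟨1, by rw [mul_one]; exact_mod_cast h.symm⟩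
  have key := sum_Icc_inv_pow_add_inv_pow_mul_pow_div (a : ℚ) (p - a) ha0 hpa m
  rw [add_sub_cancel] at key
  simpa [binomInvSum] using key

/-- The key rational identity relating the sum to binomial coefficients. -/
theorem stmt8 (p : ℕ) (hp : p.Prime) (a : ℤ) (ha : ¬ (p : ℤ) ∣ a) (n : ℕ) (hn : 1 ≤ n) :
    ∑ k ∈ Finset.Icc 1 n,
        (1 / (a : ℚ) ^ k + 1 / ((p : ℚ) - (a : ℚ)) ^ k) * (p : ℚ) ^ k / (k : ℚ) =
      (p : ℚ) ^ (n + 1) / ((n : ℚ) * ((a : ℚ) * ((p : ℚ) - (a : ℚ))) ^ n) *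
        ∑ k ∈ Finset.range n,
          (a : ℚ) ^ k * ((p : ℚ) - (a : ℚ)) ^ (n - 1 - k) / ((n - 1).choose k : ℚ) :=
  stmt8_general p a ha n hn
end

section
/- Let p be a prime and a an integer coprime to p. For every even positive integer k, v_p((1/a^k + 1/(p-a)^k) · p^k/k) ≥ k - v_p(k/2). -/
/-!
Writing `n = a ^ k + (p - a) ^ k`, the quantity is `n p ^ k / ((a (p - a)) ^ k k)`, and `a (p - a)`
is a `p`-adic unit, so its valuation is `v_p(n) + k - v_p(2) - v_p(k / 2)`. It remains to see
`v_p(2) ≤ v_p(n)`, which only matters for `p = 2`: then `a` and `2 - a` are odd, so `n` is even.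
-/

theorem one_div_pow_add_one_div_pow {K : Type*} [Field K] {x y : K} (hx : x ≠ 0) (hy : y ≠ 0)
    (k : ℕ) : 1 / x ^ k + 1 / y ^ k = (x ^ k + y ^ k) / (x * y) ^ k := by
  field_simp
  ring

theorem padicValRat_intCast_eq_zero {p : ℕ} {a : ℤ} (ha : ¬ (p : ℤ) ∣ a) :
    padicValRat p (a : ℚ) = 0 := by
  rw [padicValRat.of_int, padicValInt.eq_zero_of_not_dvd ha]
  rfl

theorem ne_zero_of_not_dvd {α : Type*} [SemigroupWithZero α] {m a : α} (h : ¬ m ∣ a) :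
    a ≠ 0 :=
  fun h0 => h (h0 ▸ dvd_zero m)

theorem not_dvd_sub_of_not_dvd {m a : ℤ} (ha : ¬ m ∣ a) : ¬ m ∣ m - a :=
  (dvd_sub_right dvd_rfl).not.2 ha

section

variable {p : ℕ} [Fact p.Prime]

theorem padicValRat_one_div_pow_add_one_div_pow {x y : ℚ} {k : ℕ} (hx : x ≠ 0) (hy : y ≠ 0)
    (hxy : x ^ k + y ^ k ≠ 0) :
    padicValRat p (1 / x ^ k + 1 / y ^ k) =
      padicValRat p (x ^ k + y ^ k) - k * (padicValRat p x + padicValRat p y) := by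
  rw [one_div_pow_add_one_div_pow hx hy, padicValRat.div hxy (by positivity), padicValRat.pow,
    padicValRat.mul hx hy]

theorem padicValRat_one_div_pow_add_one_div_pow_sub {a : ℤ} (ha : ¬ (p : ℤ) ∣ a) {k : ℕ}
    (hk : Even k) :
    padicValRat p (1 / (a : ℚ) ^ k + 1 / ((p : ℚ) - a) ^ k) =
      padicValInt p (a ^ k + (p - a) ^ k) := by
  have hb := not_dvd_sub_of_not_dvd ha
  have hcast : (p : ℚ) - a = ((p - a : ℤ) : ℚ) := by push_cast; ring
  have ha0 : (a : ℚ) ≠ 0 := by exact_mod_cast ne_zero_of_not_dvd ha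
  have hb0 : (p : ℚ) - a ≠ 0 := by rw [hcast]; exact_mod_cast ne_zero_of_not_dvd hb
  have hsum0 : (a : ℚ) ^ k + ((p : ℚ) - a) ^ k ≠ 0 :=
    (add_pos (hk.pow_pos ha0) (hk.pow_pos hb0)).ne'
  rw [padicValRat_one_div_pow_add_one_div_pow ha0 hb0 hsum0,
    hcast, padicValRat_intCast_eq_zero ha, padicValRat_intCast_eq_zero hb, ← padicValRat.of_int]
  push_cast
  ring

theorem padicValRat_mul_pow_div {x : ℚ} {k : ℕ} (hx : x ≠ 0) (hk : k ≠ 0) :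
    padicValRat p (x * (p : ℚ) ^ k / k) = padicValRat p x + k - padicValNat p k := by
  have hp : (p : ℚ) ≠ 0 := Nat.cast_ne_zero.2 (Fact.out : p.Prime).ne_zero
  rw [padicValRat.div (mul_ne_zero hx (pow_ne_zero _ hp)) (Nat.cast_ne_zero.2 hk),
    padicValRat.mul hx (pow_ne_zero _ hp), padicValRat.pow,
    padicValRat.self (Fact.out : p.Prime).one_lt, padicValRat.of_nat]
  ring

theorem padicValNat_of_even {k : ℕ} (hk : Even k) (hk0 : k ≠ 0) :
    padicValNat p k = padicValNat p 2 + padicValNat p (k / 2) := by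
  obtain ⟨m, rfl⟩ := hk
  rw [← two_mul, Nat.mul_div_cancel_left _ two_pos, padicValNat.mul two_ne_zero (by omega)]

theorem pow_padicValNat_two_dvd_pow_add_sub_pow {a : ℤ} (ha : ¬ (p : ℤ) ∣ a) (k : ℕ) :
    (p : ℤ) ^ padicValNat p 2 ∣ a ^ k + (p - a) ^ k := by
  rcases eq_or_ne p 2 with rfl | hp2
  · have hodd : Odd a := Int.not_even_iff_odd.1 (by simpa [even_iff_two_dvd] using ha)
    have hodd' : Odd (2 - a) := Int.not_even_iff_odd.1 (by simpa [Int.even_sub] using hodd)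
    rw [padicValNat.self one_lt_two, pow_one, Nat.cast_ofNat]
    exact (hodd.pow.add_odd hodd'.pow).two_dvd
  · have h2 : ¬ p ∣ 2 := fun h => hp2 ((Nat.prime_dvd_prime_iff_eq Fact.out Nat.prime_two).1 h)
    rw [padicValNat.eq_zero_of_not_dvd h2, pow_zero]
    exact one_dvd _

end

/-- For even `k`, `v_p` of the `k`-th term is at least `k - v_p(k/2)`. -/
theorem stmt9 (p : ℕ) (hp : p.Prime) (a : ℤ) (ha : ¬ (p : ℤ) ∣ a)
    (k : ℕ) (hk1 : 1 ≤ k) (hk : Even k) :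
    (k : ℤ) - (padicValNat p (k / 2) : ℤ) ≤
      padicValRat p ((1 / (a : ℚ) ^ k + 1 / ((p : ℚ) - (a : ℚ)) ^ k) * (p : ℚ) ^ k / (k : ℚ)) := by
  have : Fact p.Prime := ⟨hp⟩
  have hk0 : k ≠ 0 := by omega
  have hn : a ^ k + (p - a) ^ k ≠ 0 := (add_pos (hk.pow_pos (ne_zero_of_not_dvd ha))
    (hk.pow_pos (ne_zero_of_not_dvd (not_dvd_sub_of_not_dvd ha)))).ne'
  have hv2 : padicValNat p 2 ≤ padicValInt p (a ^ k + (p - a) ^ k) :=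
    ((padicValInt_dvd_iff _ _).1 (pow_padicValNat_two_dvd_pow_add_sub_pow ha k)).resolve_left hn
  have hpos : 0 < 1 / (a : ℚ) ^ k + 1 / ((p : ℚ) - a) ^ k := by
    have ha0 : (a : ℚ) ≠ 0 := by exact_mod_cast ne_zero_of_not_dvd ha
    have hb0 : ((p - a : ℤ) : ℚ) ≠ 0 := by
      exact_mod_cast ne_zero_of_not_dvd (not_dvd_sub_of_not_dvd ha)
    push_cast at hb0
    exact add_pos (one_div_pos.2 (hk.pow_pos ha0)) (one_div_pos.2 (hk.pow_pos hb0))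
  rw [padicValRat_mul_pow_div hpos.ne' hk0, padicValRat_one_div_pow_add_one_div_pow_sub ha hk,
    padicValNat_of_even hk hk0, Nat.cast_add]
  linarith [(Nat.cast_le (α := ℤ)).2 hv2]
end

section
/- Let p be a prime and a an integer not divisible by p. Then in the field of p-adic numbers Q_p, the series Σ_{k=1}^{∞} (1/a^k + 1/(p-a)^k) · p^k/k converges and its sum equals 0. -/
/-!
With `x = p / a` and `y = p / (p - a)` we have `y = -x / (1 - x)`, i.e. `(1 - x)(1 - y) = 1`, so the
series is `-log (1 - x) - log (1 - y) = 0`. No `p`-adic logarithm is needed: expanding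
`y ^ (k + 1) / (k + 1)` in powers of `x` gives a double series that is absolutely summable since
`‖x‖ < 1` and `‖1 / (k + 1)‖ ≤ k + 1`; its row sums are the terms of the `y`-series, and by
`∑ₖ (-1) ^ (k + 1) C(m, k) / (k + 1) = -1 / (m + 1)` its antidiagonal sums are the negated terms of
the `x`-series.
-/

open Finset

theorem sum_range_neg_one_pow_mul_choose_div_succ {K : Type*} [Field K] [CharZero K] (m : ℕ) :
    ∑ k ∈ range (m + 1), (-1 : K) ^ (k + 1) * m.choose k / (k + 1) = -1 / (m + 1) := by
  have hm : (m : K) + 1 ≠ 0 := Nat.cast_add_one_ne_zero m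
  have absorb : ∀ k ∈ range (m + 1), (-1 : K) ^ (k + 1) * m.choose k / (k + 1)
      = (-1 : K) ^ (k + 1) * (m + 1).choose (k + 1) / (m + 1) := by
    intro k _
    have hk : (k : K) + 1 ≠ 0 := Nat.cast_add_one_ne_zero k
    have h : ((m : K) + 1) * m.choose k = (m + 1).choose (k + 1) * (k + 1) := by
      exact_mod_cast Nat.add_one_mul_choose_eq m k
    field_simp
    linear_combination h
  have alternating : ∑ i ∈ range (m + 2), (-1 : K) ^ i * (m + 1).choose i = 0 := by
    exact_mod_cast Int.alternating_sum_range_choose_of_ne (n := m + 1) (by omega)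
  rw [sum_congr rfl absorb, ← sum_div, div_left_inj' hm]
  rw [sum_range_succ'] at alternating
  simpa [eq_neg_iff_add_eq_zero] using alternating

/-- The coefficient of `x ^ (j + k + 1)` in the expansion of `(-x / (1 - x)) ^ (k + 1) / (k + 1)`. -/
def logSubstTerm {K : Type*} [Field K] (x : K) (kj : ℕ × ℕ) : K :=
  (-1) ^ (kj.1 + 1) * (kj.2 + kj.1).choose kj.1 / (kj.1 + 1) * x ^ (kj.2 + kj.1 + 1)

theorem sum_antidiagonal_logSubstTerm {K : Type*} [Field K] [CharZero K] (x : K) (m : ℕ) :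
    ∑ kj ∈ antidiagonal m, logSubstTerm x kj = -(x ^ (m + 1) / (m + 1)) := by
  rw [Nat.sum_antidiagonal_eq_sum_range_succ_mk]
  have h : ∀ k ∈ range (m + 1), logSubstTerm x (k, m - k)
      = (-1 : K) ^ (k + 1) * m.choose k / (k + 1) * x ^ (m + 1) := by
    intro k hk
    rw [logSubstTerm, Nat.sub_add_cancel (Nat.le_of_lt_succ (mem_range.mp hk))]
  rw [sum_congr rfl h, ← sum_mul, sum_range_neg_one_pow_mul_choose_div_succ]
  ring

theorem hasSum_logSubstTerm_fst {K : Type*} [NormedField K] [CompleteSpace K] {x : K}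
    (hx : ‖x‖ < 1) (k : ℕ) :
    HasSum (fun j ↦ logSubstTerm x (k, j)) ((-x / (1 - x)) ^ (k + 1) / (k + 1)) := by
  have hterm : (fun j ↦ logSubstTerm x (k, j))
      = fun j ↦ (-1) ^ (k + 1) / (k + 1) * x ^ (k + 1) * ((j + k).choose k * x ^ j) := by
    funext j
    rw [logSubstTerm, add_assoc, add_comm k 1, ← add_assoc, pow_add]
    ring
  have hsum : (-x / (1 - x)) ^ (k + 1) / (k + 1)
      = (-1) ^ (k + 1) / (k + 1) * x ^ (k + 1) * (1 / (1 - x) ^ (k + 1)) := by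
    rw [div_pow, neg_pow]
    ring
  rw [hterm, hsum]
  exact (hasSum_choose_mul_geometric_of_norm_lt_one k hx).mul_left _

namespace Padic

variable {p : ℕ} [Fact p.Prime]

theorem norm_natCast_inv_le {n : ℕ} (hn : n ≠ 0) : ‖(n : ℚ_[p])⁻¹‖ ≤ n := by
  rw [norm_inv, norm_eq_zpow_neg_valuation (Nat.cast_ne_zero.mpr hn), valuation_natCast,
    ← zpow_neg, neg_neg, zpow_natCast]
  exact_mod_cast Nat.le_of_dvd (Nat.pos_of_ne_zero hn) pow_padicValNat_dvd

theorem norm_logSubstTerm_le (x : ℚ_[p]) (k j : ℕ) :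
    ‖logSubstTerm x (k, j)‖ ≤ ((k + 1) * ‖x‖ ^ k) * ‖x‖ ^ j * ‖x‖ := by
  have hchoose : ‖((j + k).choose k : ℚ_[p])‖ ≤ 1 := by
    exact_mod_cast norm_int_le_one ((j + k).choose k)
  have hinv : ‖((k : ℚ_[p]) + 1)⁻¹‖ ≤ k + 1 := by
    exact_mod_cast norm_natCast_inv_le (p := p) k.succ_ne_zero
  calc ‖logSubstTerm x (k, j)‖
      = ‖((j + k).choose k : ℚ_[p])‖ * ‖((k : ℚ_[p]) + 1)⁻¹‖ * ‖x‖ ^ (j + k + 1) := by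
        simp [logSubstTerm, div_eq_mul_inv]
    _ ≤ 1 * (k + 1) * ‖x‖ ^ (j + k + 1) := by gcongr
    _ = ((k + 1) * ‖x‖ ^ k) * ‖x‖ ^ j * ‖x‖ := by ring

theorem summable_logSubstTerm {x : ℚ_[p]} (hx : ‖x‖ < 1) : Summable (logSubstTerm x) := by
  have hx' : ‖‖x‖‖ < 1 := by rwa [norm_norm]
  have hrow : Summable fun k : ℕ ↦ ((k : ℝ) + 1) * ‖x‖ ^ k := by
    simpa [add_mul] using
      (summable_pow_mul_geometric_of_norm_lt_one 1 hx').add (summable_geometric_of_norm_lt_one hx')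
  refine Summable.of_norm_bounded ?_ fun kj ↦ norm_logSubstTerm_le x kj.1 kj.2
  exact (hrow.mul_of_nonneg (summable_geometric_of_lt_one (norm_nonneg x) hx)
    (fun k ↦ by positivity) (fun j ↦ by positivity)).mul_right _

theorem hasSum_log_add_log_neg_div_one_sub {x : ℚ_[p]} (hx : ‖x‖ < 1) :
    HasSum (fun k : ℕ ↦ x ^ (k + 1) / (k + 1) + (-x / (1 - x)) ^ (k + 1) / (k + 1)) 0 := by
  obtain ⟨S, hS⟩ := summable_logSubstTerm hx
  have hys : HasSum (fun k : ℕ ↦ (-x / (1 - x)) ^ (k + 1) / (k + 1)) S :=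
    hS.prod_fiberwise (hasSum_logSubstTerm_fst hx)
  have hxs : HasSum (fun m : ℕ ↦ -(x ^ (m + 1) / (m + 1))) S := by
    refine HasSum.sigma ((HasAntidiagonal.sigmaAntidiagonalEquivProd.hasSum_iff).mpr hS)
      fun m ↦ ?_
    rw [← sum_antidiagonal_logSubstTerm, ← sum_attach]
    exact hasSum_fintype _
  simpa using hxs.neg.add hys

end Padic

/-- In `ℚ_p`, the series `Σ (1/a^k + 1/(p-a)^k) p^k / k` converges to `0`. -/
theorem stmt15 (p : ℕ) [hp : Fact p.Prime] (a : ℤ) (ha : ¬ (p : ℤ) ∣ a) :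
    Filter.Tendsto
      (fun n : ℕ => ∑ k ∈ Finset.Icc 1 n,
        (1 / (a : ℚ_[p]) ^ k + 1 / ((p : ℚ_[p]) - (a : ℚ_[p])) ^ k) * (p : ℚ_[p]) ^ k / (k : ℚ_[p]))
      Filter.atTop (nhds 0) := by
  have hnorm_a : ‖(a : ℚ_[p])‖ = 1 :=
    (Padic.norm_int_le_one a).lt_or_eq.resolve_left (mt Padic.norm_intCast_lt_one_iff.mp ha)
  have ha0 : (a : ℚ_[p]) ≠ 0 := norm_ne_zero_iff.mp (by simp [hnorm_a])
  have hx : ‖(p / a : ℚ_[p])‖ < 1 := by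
    rw [norm_div, hnorm_a, div_one]
    exact Padic.norm_p_lt_one
  have hy : -(p / a : ℚ_[p]) / (1 - p / a) = p / (p - a) := by
    rw [← neg_div_neg_eq, neg_neg, neg_sub, div_sub_one ha0, div_div_div_cancel_right₀ ha0]
  have hsum := (Padic.hasSum_log_add_log_neg_div_one_sub hx).tendsto_sum_nat
  rw [hy] at hsum
  convert hsum using 2 with n
  rw [← Ico_add_one_right_eq_Icc, sum_Ico_eq_sum_range, Nat.add_sub_cancel]
  refine sum_congr rfl fun k _ ↦ ?_
  rw [div_pow, div_pow, add_comm 1 k]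
  push_cast
  ring
end

section
/- Let p be a prime and a an integer not divisible by p. Write, as rational functions, R_n(X) = Σ_{k=1}^{n} ((X/a)^k/k + (X/(X-a))^k/k). Then X^{n+1} divides the numerator of R_n(X); more precisely, R_n(X) = X^{n+1} · U_n(X) / (a^n (X-a)^n · lcm(1,...,n)) for some polynomial U_n with integer coefficients. -/
/-!
Put `y = X / a` and `z = X / (X - a)`, so that `(1 - y) (1 - z) = 1` and `X` divides `y` and `z`.
Then `R_n = T_n(y) + T_n(z)`, where `T_n(w) = ∑_{k=1}^n w^k / k` truncates `-log (1 - w)`, so `R_n`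
is a truncation of `-log ((1 - y) (1 - z)) = 0`. Concretely, for any derivation
`(1 - y) R_n' = (z^n - y^n) y'`, which is divisible by `X^n`; since also `R_n(0) = 0`, in `ℚ⟦X⟧`
this forces `X^{n+1} ∣ R_n`. Multiplying by `a^n (X - a)^n lcm(1, …, n)`, a unit of `ℚ⟦X⟧`,
gives a polynomial with integer coefficients and the same order at `0`.
-/

open Finset Polynomial
open scoped PowerSeries

section TruncNegLog

variable {A : Type*} [CommRing A] [Algebra ℚ A]

noncomputable def truncNegLog (n : ℕ) (w : A) : A :=
  ∑ k ∈ Icc 1 n, (k : ℚ)⁻¹ • w ^ k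

theorem Derivation.map_truncNegLog (D : Derivation ℚ A A) (n : ℕ) (w : A) :
    D (truncNegLog n w) = (∑ k ∈ range n, w ^ k) * D w := by
  rw [truncNegLog, map_sum, ← Ico_add_one_right_eq_Icc, sum_Ico_eq_sum_range, Nat.add_sub_cancel,
    sum_mul]
  refine sum_congr rfl fun k _ => ?_
  rw [D.map_smul, D.leibniz_pow, add_tsub_cancel_left, smul_comm, ← Nat.cast_smul_eq_nsmul ℚ,
    smul_smul, mul_inv_cancel₀ (by positivity), one_smul, smul_eq_mul]

theorem Derivation.one_sub_mul_map_truncNegLog_add (D : Derivation ℚ A A) (n : ℕ) {y z : A}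
    (hyz : (1 - y) * (1 - z) = 1) :
    (1 - y) * D (truncNegLog n y + truncNegLog n z) = (z ^ n - y ^ n) * D y := by
  have hDz : (1 - y) * D z = -((1 - z) * D y) := by
    have := congrArg D hyz
    rw [D.leibniz, D.map_one_eq_zero, map_sub, map_sub, D.map_one_eq_zero] at this
    simp only [smul_eq_mul] at this
    linear_combination -this
  rw [map_add, D.map_truncNegLog, D.map_truncNegLog]
  linear_combination (D y) * mul_neg_geom_sum y n + (∑ k ∈ range n, z ^ k) * hDz
    - (D y) * mul_neg_geom_sum z n

theorem dvd_truncNegLog {w d : A} (n : ℕ) (h : d ∣ w) : d ∣ truncNegLog n w :=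
  dvd_sum fun k hk => by
    rw [Algebra.smul_def]
    exact dvd_mul_of_dvd_right (dvd_pow h (by simp at hk; omega)) _

end TruncNegLog

theorem one_sub_mul_mul_one_sub_mul_eq_one {R : Type*} [CommRing R] {a x s t : R}
    (hs : a * s = 1) (ht : (x - a) * t = 1) : (1 - x * s) * (1 - x * t) = 1 := by
  linear_combination (x * s) * ht + (x * t) * hs

theorem pow_sub_eq_mul_pow_of_mul_eq_one {M : Type*} [CommMonoid M] {u v : M} (h : u * v = 1)
    {k n : ℕ} (hk : k ≤ n) : u ^ (n - k) = u ^ n * v ^ k := by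
  rw [← pow_sub_mul_pow u hk, mul_assoc, ← mul_pow, h, one_pow, mul_one]

namespace PowerSeries

theorem X_pow_succ_dvd_of_X_dvd_of_X_pow_dvd_derivative {R : Type*} [CommRing R]
    [IsAddTorsionFree R] {f : R⟦X⟧} {n : ℕ} (h0 : X ∣ f) (hD : X ^ n ∣ d⁄dX R f) :
    X ^ (n + 1) ∣ f := by
  rw [X_pow_dvd_iff] at hD ⊢
  rintro (_ | m) hm
  · simpa using X_dvd_iff.mp h0
  · have h := hD m (by omega)
    rw [coeff_derivative, mul_comm, ← Nat.cast_succ, ← nsmul_eq_mul] at h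
    exact (nsmul_eq_zero_iff_right m.succ_ne_zero).mp h

theorem coeff_eval₂_X_of_int {S : Type*} [CommRing S] (f : ℤ →+* S⟦X⟧) (P : ℤ[X]) (d : ℕ) :
    coeff d (P.eval₂ f X) = P.coeff d := by
  induction P using Polynomial.induction_on' with
  | add p q hp hq => simp [hp, hq]
  | monomial m c =>
    simp only [eval₂_monomial, eq_intCast, ← map_intCast (C (R := S)),
      coeff_C_mul_X_pow, Polynomial.coeff_monomial]
    split_ifs <;> simp_all [eq_comm]

theorem X_pow_succ_dvd_truncNegLog_add (n : ℕ) {s t : ℚ⟦X⟧}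
    (hst : (1 - X * s) * (1 - X * t) = 1) :
    X ^ (n + 1) ∣ truncNegLog n (X * s) + truncNegLog n (X * t) := by
  refine X_pow_succ_dvd_of_X_dvd_of_X_pow_dvd_derivative
    (dvd_add (dvd_truncNegLog n (dvd_mul_right X s)) (dvd_truncNegLog n (dvd_mul_right X t))) ?_
  refine (IsUnit.of_mul_eq_one _ hst).dvd_mul_left.mp ?_
  rw [(derivative ℚ).one_sub_mul_map_truncNegLog_add n hst, mul_pow, mul_pow]
  exact dvd_mul_of_dvd_left (dvd_sub (dvd_mul_right _ _) (dvd_mul_right _ _)) _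

end PowerSeries

noncomputable def clearedPoly (a : ℤ) (n : ℕ) : ℤ[X] :=
  ∑ k ∈ Icc 1 n, C (((Icc 1 n).lcm id / k : ℕ) : ℤ) * X ^ k *
    (C a ^ (n - k) * (X - C a) ^ n + C a ^ n * (X - C a) ^ (n - k))

theorem eval₂_clearedPoly {A : Type*} [CommRing A] [Algebra ℚ A] (a : ℤ) (n : ℕ) {x s t : A}
    (hs : (a : A) * s = 1) (ht : (x - a) * t = 1) :
    (clearedPoly a n).eval₂ (Int.castRingHom A) x =
      ((Icc 1 n).lcm id : ℕ) * (a : A) ^ n * (x - a) ^ n *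
        (truncNegLog n (x * s) + truncNegLog n (x * t)) := by
  simp only [clearedPoly, truncNegLog, eval₂_finsetSum, mul_sum, ← sum_add_distrib]
  refine sum_congr rfl fun k hk => ?_
  have hquot : (((Icc 1 n).lcm id / k : ℕ) : A) =
      ((Icc 1 n).lcm id : ℕ) * algebraMap ℚ A (k : ℚ)⁻¹ := by
    have hdvd : k ∣ (Icc 1 n).lcm id := dvd_lcm hk
    rw [← map_natCast (algebraMap ℚ A),
      Nat.cast_div hdvd (Nat.cast_ne_zero.mpr (by simp at hk; omega)), div_eq_mul_inv, map_mul,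
      map_natCast]
  replace hk : k ≤ n := (mem_Icc.mp hk).2
  simp only [eval₂_mul, eval₂_add, eval₂_pow, eval₂_sub, eval₂_X, eval₂_C,
    Int.coe_castRingHom, Int.cast_natCast, hquot, Algebra.smul_def,
    pow_sub_eq_mul_pow_of_mul_eq_one hs hk, pow_sub_eq_mul_pow_of_mul_eq_one ht hk]
  ring

theorem X_pow_succ_dvd_clearedPoly {a : ℤ} (ha : a ≠ 0) (n : ℕ) :
    X ^ (n + 1) ∣ clearedPoly a n := by
  have hs : (a : ℚ⟦X⟧) * PowerSeries.C (a : ℚ)⁻¹ = 1 := by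
    rw [← map_intCast (PowerSeries.C (R := ℚ)), ← map_mul, mul_inv_cancel₀ (by exact_mod_cast ha),
      map_one]
  have ht : (PowerSeries.X - (a : ℚ⟦X⟧)) * (PowerSeries.X - (a : ℚ⟦X⟧))⁻¹ = 1 :=
    PowerSeries.mul_inv_cancel _ (by simpa using ha)
  have hdvd := dvd_mul_of_dvd_right
    (PowerSeries.X_pow_succ_dvd_truncNegLog_add n (one_sub_mul_mul_one_sub_mul_eq_one hs ht))
    ((((Icc 1 n).lcm id : ℕ) : ℚ⟦X⟧) * (a : ℚ⟦X⟧) ^ n * (PowerSeries.X - (a : ℚ⟦X⟧)) ^ n)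
  rw [← eval₂_clearedPoly a n hs ht, PowerSeries.X_pow_dvd_iff] at hdvd
  refine X_pow_dvd_iff.mpr fun d hd => Int.cast_injective (α := ℚ) ?_
  rw [Int.cast_zero, ← hdvd d hd, PowerSeries.coeff_eval₂_X_of_int]

theorem stmt19_general (p : ℕ) (a : ℤ) (ha : ¬ (p : ℤ) ∣ a) (n : ℕ) :
    ∃ U : Polynomial ℤ, ∀ x : ℚ, x ≠ 0 → x - (a : ℚ) ≠ 0 →
      ∑ k ∈ Finset.Icc 1 n, ((x / (a : ℚ)) ^ k / (k : ℚ) + (x / (x - (a : ℚ))) ^ k / (k : ℚ)) =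
        x ^ (n + 1) * (Polynomial.aeval x U) /
          ((a : ℚ) ^ n * (x - (a : ℚ)) ^ n * ((Finset.lcm (Finset.Icc 1 n) id : ℕ) : ℚ)) := by
  have ha0 : a ≠ 0 := by rintro rfl; exact ha (dvd_zero _)
  have haq : (a : ℚ) ≠ 0 := by exact_mod_cast ha0
  obtain ⟨U, hU⟩ := X_pow_succ_dvd_clearedPoly ha0 n
  refine ⟨U, fun x _ hxa => ?_⟩
  have heval := eval₂_clearedPoly a n (mul_inv_cancel₀ haq) (mul_inv_cancel₀ hxa)
  rw [hU, eval₂_mul, eval₂_X_pow, ← algebraMap_int_eq, ← aeval_def] at heval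
  have hL : ((Finset.lcm (Finset.Icc 1 n) id : ℕ) : ℚ) ≠ 0 := by
    simp [Finset.lcm_eq_zero_iff]
  rw [eq_div_iff (by positivity), heval]
  simp only [truncNegLog, smul_eq_mul, ← sum_add_distrib, mul_sum, sum_mul]
  refine sum_congr rfl fun k _ => ?_
  ring

/-- `R_n(X)` vanishes to order at least `n+1` at `X = 0`: there is an integer polynomial `U_n`
with `R_n(X) = X^{n+1} U_n(X) / (a^n (X-a)^n lcm(1,…,n))` as rational functions. -/
theorem stmt19 (p : ℕ) (hp : p.Prime) (a : ℤ) (ha : ¬ (p : ℤ) ∣ a) (n : ℕ) (hn : 1 ≤ n) :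
    ∃ U : Polynomial ℤ, ∀ x : ℚ, x ≠ 0 → x - (a : ℚ) ≠ 0 →
      ∑ k ∈ Finset.Icc 1 n, ((x / (a : ℚ)) ^ k / (k : ℚ) + (x / (x - (a : ℚ))) ^ k / (k : ℚ)) =
        x ^ (n + 1) * (Polynomial.aeval x U) /
          ((a : ℚ) ^ n * (x - (a : ℚ)) ^ n * ((Finset.lcm (Finset.Icc 1 n) id : ℕ) : ℚ)) :=
  stmt19_general p a ha n
end
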